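/- Let μ1 and μ2 be finitely supported probability measures on the vertex set V of G. Then there exists a transport plan π from μ1 to μ2 whose cost equals W_1(μ1, μ2) and which satisfies: for every x ∈ V with μ1(x) ≤ μ2(x), π(x,x) = μ1(x). -/

import Mathlib

open scoped Classical

noncomputable def mu {V : Type*} (G : SimpleGraph V) [G.LocallyFinite] (x : V) (p : ℝ) :
    V → ℝ :=
  fun z => if z = x then p else if G.Adj x z then (1 - p) / (G.degree x) else 0

def IsPlan {V : Type*} (π : V × V → ℝ) (μ1 μ2 : V → ℝ) : Prop :=
  (∀ q, π q ∈ Set.Icc (0 : ℝ) 1) ∧ (Function.support π).Finite ∧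
    (∀ u, ∑ᶠ v, π (u, v) = μ1 u) ∧ (∀ v, ∑ᶠ u, π (u, v) = μ2 v)

noncomputable def cost {V : Type*} (G : SimpleGraph V) (π : V × V → ℝ) : ℝ :=
  ∑ᶠ q : V × V, (G.dist q.1 q.2 : ℝ) * π q

noncomputable def W1 {V : Type*} (G : SimpleGraph V) (μ1 μ2 : V → ℝ) : ℝ :=
  sInf (cost G '' {π | IsPlan π μ1 μ2})

noncomputable def kappa {V : Type*} (G : SimpleGraph V) [G.LocallyFinite]
    (p : ℝ) (x y : V) : ℝ :=
  1 - W1 G (mu G x p) (mu G y p)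

def IsLip {V : Type*} (G : SimpleGraph V) (φ : V → ℝ) : Prop :=
  ∀ u v, |φ u - φ v| ≤ (G.dist u v : ℝ)

noncomputable def Fpot {V : Type*} (G : SimpleGraph V) [G.LocallyFinite]
    (x y : V) (φ : V → ℝ) : ℝ :=
  (G.degree y : ℝ) * ∑ z ∈ (G.neighborFinset x).erase y, φ z
    - (G.degree x : ℝ) * ∑ z ∈ (G.neighborFinset y).erase x, φ z

noncomputable def cIdle {V : Type*} (G : SimpleGraph V) [G.LocallyFinite]
    (x y : V) (j : ℤ) : ℝ :=
  sSup (Fpot G x y ''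
    {φ | IsLip G φ ∧ (∀ w, ∃ n : ℤ, φ w = (n : ℝ)) ∧ φ x = (j : ℝ) ∧ φ y = 0})

noncomputable def fIdle {V : Type*} (G : SimpleGraph V) [G.LocallyFinite]
    (x y : V) (j : ℤ) (p : ℝ) : ℝ :=
  (p - (1 - p) / (G.degree y : ℝ)) * (j : ℝ)
    + ((1 - p) / ((G.degree x : ℝ) * (G.degree y : ℝ))) * cIdle G x y j

def IsFinProb {V : Type*} (μ : V → ℝ) : Prop :=
  (∀ v, 0 ≤ μ v) ∧ (Function.support μ).Finite ∧ ∑ᶠ v, μ v = 1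

/-!
All plans from `μ1` to `μ2` live on `S × S`, where `S` is the union of the two supports. So the
plans form a compact set on which the cost is continuous, and the optimal plans form a nonempty
compact set; take one, `π`, of maximal diagonal mass. If `μ1 x ≤ μ2 x` but `π (x, x) < μ1 x`, then
`π` sends mass from `x` to some `u ≠ x` and into `x` from some `v ≠ x`. Rerouting `ε` of it, so
that it stays at `x` and travels `v → u` instead, keeps both marginals, does not increase the cost
because `d(v, u) ≤ d(v, x) + d(x, u)`, and increases the diagonal mass: a contradiction.
-/

open Function Set

section Plans

variable {V : Type*} {μ μ1 μ2 : V → ℝ} {π : V × V → ℝ}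

lemma IsFinProb.le_one (h : IsFinProb μ) (v : V) : μ v ≤ 1 :=
  h.2.2 ▸ single_le_finsum v h.2.1 h.1

lemma IsFinProb.isPlan_prod (h1 : IsFinProb μ1) (h2 : IsFinProb μ2) :
    IsPlan (fun q => μ1 q.1 * μ2 q.2) μ1 μ2 := by
  refine ⟨fun q => ⟨mul_nonneg (h1.1 _) (h2.1 _), ?_⟩, ?_, fun u => ?_, fun v => ?_⟩
  · exact mul_le_one₀ (h1.le_one _) (h2.1 _) (h2.le_one _)
  · exact (h1.2.1.prod h2.2.1).subset fun q hq => mul_ne_zero_iff.1 hq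
  · rw [← mul_finsum μ2 (μ1 u), h2.2.2, mul_one]
  · rw [← finsum_mul μ1 (μ2 v), h1.2.2, one_mul]

namespace IsPlan

lemma finite_support_left (hπ : IsPlan π μ1 μ2) (u : V) : (support fun v => π (u, v)).Finite :=
  (hπ.2.1.image Prod.snd).subset fun v hv => ⟨(u, v), hv, rfl⟩

lemma finite_support_right (hπ : IsPlan π μ1 μ2) (v : V) : (support fun u => π (u, v)).Finite :=
  (hπ.2.1.image Prod.fst).subset fun u hu => ⟨(u, v), hu, rfl⟩

lemma apply_le_left (hπ : IsPlan π μ1 μ2) (u v : V) : π (u, v) ≤ μ1 u :=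
  hπ.2.2.1 u ▸ single_le_finsum v (hπ.finite_support_left u) fun _ => (hπ.1 _).1

lemma apply_le_right (hπ : IsPlan π μ1 μ2) (u v : V) : π (u, v) ≤ μ2 v :=
  hπ.2.2.2 v ▸ single_le_finsum u (hπ.finite_support_right v) fun _ => (hπ.1 _).1

lemma support_subset (hπ : IsPlan π μ1 μ2) : support π ⊆ support μ1 ×ˢ support μ2 := by
  intro q hq
  have hpos : 0 < π q := lt_of_le_of_ne (hπ.1 q).1 (Ne.symm hq)
  exact ⟨(hpos.trans_le (hπ.apply_le_left q.1 q.2)).ne',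
    (hpos.trans_le (hπ.apply_le_right q.1 q.2)).ne'⟩

lemma exists_ne_pos_left (hπ : IsPlan π μ1 μ2) {x : V} (hx : π (x, x) < μ1 x) :
    ∃ u ≠ x, 0 < π (x, u) := by
  by_contra! h
  refine hx.ne (hπ.2.2.1 x ▸ (finsum_eq_single (fun u => π (x, u)) x fun u hu => ?_).symm)
  exact le_antisymm (h u hu) (hπ.1 _).1

lemma exists_ne_pos_right (hπ : IsPlan π μ1 μ2) {x : V} (hx : π (x, x) < μ2 x) :
    ∃ v ≠ x, 0 < π (v, x) := by
  by_contra! h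
  refine hx.ne (hπ.2.2.2 x ▸ (finsum_eq_single (fun v => π (v, x)) x fun v hv => ?_).symm)
  exact le_antisymm (h v hv) (hπ.1 _).1

end IsPlan

end Plans

section FinsetSupport

variable {V : Type*} {μ1 μ2 : V → ℝ} {π : V × V → ℝ} {S : Finset V}

lemma exists_finset_support_subset (hμ1 : (support μ1).Finite) (hμ2 : (support μ2).Finite) :
    ∃ S : Finset V, support μ1 ⊆ S ∧ support μ2 ⊆ S :=
  ⟨(hμ1.union hμ2).toFinset, by simp⟩

lemma finsum_apply_left_eq_sum {f : V × V → ℝ} (hf : support f ⊆ ↑S ×ˢ ↑S) (u : V) :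
    ∑ᶠ v, f (u, v) = ∑ v ∈ S, f (u, v) :=
  finsum_eq_sum_of_support_subset _ fun _ hv => (hf hv).2

lemma finsum_apply_right_eq_sum {f : V × V → ℝ} (hf : support f ⊆ ↑S ×ˢ ↑S) (v : V) :
    ∑ᶠ u, f (u, v) = ∑ u ∈ S, f (u, v) :=
  finsum_eq_sum_of_support_subset _ fun _ hu => (hf hu).1

lemma isPlan_iff_of_support_subset (hle1 : ∀ u, μ1 u ≤ 1) (hS1 : support μ1 ⊆ S)
    (hS2 : support μ2 ⊆ S) :
    IsPlan π μ1 μ2 ↔ (∀ q, 0 ≤ π q) ∧ support π ⊆ ↑S ×ˢ ↑S ∧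
      (∀ u, ∑ v ∈ S, π (u, v) = μ1 u) ∧ ∀ v, ∑ u ∈ S, π (u, v) = μ2 v := by
  constructor
  · intro hπ
    have hsupp : support π ⊆ ↑S ×ˢ ↑S := hπ.support_subset.trans (prod_mono hS1 hS2)
    exact ⟨fun q => (hπ.1 q).1, hsupp,
      fun u => finsum_apply_left_eq_sum hsupp u ▸ hπ.2.2.1 u,
      fun v => finsum_apply_right_eq_sum hsupp v ▸ hπ.2.2.2 v⟩
  · rintro ⟨hnonneg, hsupp, hrow, hcol⟩
    refine ⟨fun q => ⟨hnonneg q, ?_⟩, S.finite_toSet.prod S.finite_toSet |>.subset hsupp,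
      fun u => (finsum_apply_left_eq_sum hsupp u).trans (hrow u),
      fun v => (finsum_apply_right_eq_sum hsupp v).trans (hcol v)⟩
    by_cases hq : q.2 ∈ S
    · calc π q ≤ ∑ v ∈ S, π (q.1, v) :=
            Finset.single_le_sum (f := fun v => π (q.1, v)) (fun v _ => hnonneg _) hq
        _ = μ1 q.1 := hrow q.1
        _ ≤ 1 := hle1 q.1
    · rw [support_subset_iff'.1 hsupp q fun h => hq h.2]
      exact zero_le_one

lemma isClosed_setOf_isPlan (hle1 : ∀ u, μ1 u ≤ 1) (hS1 : support μ1 ⊆ S)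
    (hS2 : support μ2 ⊆ S) : IsClosed {π : V × V → ℝ | IsPlan π μ1 μ2} := by
  simp only [isPlan_iff_of_support_subset hle1 hS1 hS2, support_subset_iff', ofPred_and,
    ofPred_forall]
  refine .inter (isClosed_iInter fun q => isClosed_le continuous_const (continuous_apply q)) <|
    .inter (isClosed_iInter fun q => isClosed_iInter fun _ =>
      isClosed_eq (continuous_apply q) continuous_const) <|
    .inter (isClosed_iInter fun u => isClosed_eq ?_ continuous_const)
      (isClosed_iInter fun v => isClosed_eq ?_ continuous_const)
  · exact continuous_finsetSum _ fun v _ => continuous_apply (u, v)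
  · exact continuous_finsetSum _ fun u _ => continuous_apply (u, v)

lemma IsPlan.cost_eq_sum (G : SimpleGraph V) (hπ : IsPlan π μ1 μ2) (hS1 : support μ1 ⊆ S)
    (hS2 : support μ2 ⊆ S) : cost G π = ∑ q ∈ S ×ˢ S, (G.dist q.1 q.2 : ℝ) * π q :=
  finsum_eq_sum_of_support_subset _ <| (support_mul_subset_right _ _).trans <|
    by simpa using hπ.support_subset.trans (prod_mono hS1 hS2)

end FinsetSupport

section Compactness

variable {V : Type*} {μ1 μ2 : V → ℝ}

lemma isCompact_setOf_isPlan (h1 : IsFinProb μ1) (hμ2 : (support μ2).Finite) :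
    IsCompact {π : V × V → ℝ | IsPlan π μ1 μ2} := by
  obtain ⟨S, hS1, hS2⟩ := exists_finset_support_subset h1.2.1 hμ2
  exact (isCompact_univ_pi fun _ => isCompact_Icc).of_isClosed_subset
    (isClosed_setOf_isPlan h1.le_one hS1 hS2) fun π hπ => mem_univ_pi.2 hπ.1

lemma continuousOn_cost (G : SimpleGraph V) (hμ1 : (support μ1).Finite)
    (hμ2 : (support μ2).Finite) : ContinuousOn (cost G) {π | IsPlan π μ1 μ2} := by
  obtain ⟨S, hS1, hS2⟩ := exists_finset_support_subset hμ1 hμ2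
  exact (continuous_finsetSum _ fun q _ => continuous_const.mul (continuous_apply q)).continuousOn
    |>.congr fun π hπ => hπ.cost_eq_sum G hS1 hS2

lemma isCompact_setOf_isPlan_cost_eq (G : SimpleGraph V) (h1 : IsFinProb μ1)
    (hμ2 : (support μ2).Finite) (c : ℝ) :
    IsCompact {π | IsPlan π μ1 μ2 ∧ cost G π = c} :=
  (isCompact_setOf_isPlan h1 hμ2).of_isClosed_subset
    ((continuousOn_cost G h1.2.1 hμ2).preimage_isClosed_of_isClosed
      (isCompact_setOf_isPlan h1 hμ2).isClosed isClosed_singleton) fun _ h => h.1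

lemma exists_isPlan_isMinOn_cost (G : SimpleGraph V) (h1 : IsFinProb μ1) (h2 : IsFinProb μ2) :
    ∃ π, IsPlan π μ1 μ2 ∧ IsMinOn (cost G) {π | IsPlan π μ1 μ2} π :=
  (isCompact_setOf_isPlan h1 h2.2.1).exists_isMinOn ⟨_, h1.isPlan_prod h2⟩
    (continuousOn_cost G h1.2.1 h2.2.1)

lemma W1_eq_cost_of_isMinOn (G : SimpleGraph V) {π : V × V → ℝ} (hπ : IsPlan π μ1 μ2)
    (hmin : IsMinOn (cost G) {π | IsPlan π μ1 μ2} π) : W1 G μ1 μ2 = cost G π :=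
  IsLeast.csInf_eq ⟨mem_image_of_mem _ hπ, fun _ ⟨_, hρ, hc⟩ => hc ▸ hmin hρ⟩

end Compactness

section Reroute

variable {V : Type*} {π : V × V → ℝ} {x u v : V} {ε : ℝ} {S : Finset V}

noncomputable def reroute (π : V × V → ℝ) (x u v : V) (ε : ℝ) : V × V → ℝ :=
  π + Pi.single (x, x) ε + Pi.single (v, u) ε - Pi.single (x, u) ε - Pi.single (v, x) ε

lemma sum_reroute_apply_left (hx : x ∈ S) (hu : u ∈ S) (w : V) :
    ∑ z ∈ S, reroute π x u v ε (w, z) = ∑ z ∈ S, π (w, z) := by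
  simp only [reroute, Pi.sub_apply, Pi.add_apply, Pi.single_apply, Prod.mk.injEq, ite_and,
    Finset.sum_sub_distrib, Finset.sum_add_distrib, Finset.sum_ite_irrel, Finset.sum_ite_eq', hx,
    hu, if_true, Finset.sum_const_zero]
  ring

lemma sum_reroute_apply_right (hx : x ∈ S) (hv : v ∈ S) (w : V) :
    ∑ z ∈ S, reroute π x u v ε (z, w) = ∑ z ∈ S, π (z, w) := by
  simp [reroute, Finset.sum_add_distrib, Finset.sum_sub_distrib, Pi.single_apply, ite_and, hx, hv]

lemma sum_mul_reroute {T : Finset (V × V)} (c : V × V → ℝ) (hxx : (x, x) ∈ T) (hvu : (v, u) ∈ T)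
    (hxu : (x, u) ∈ T) (hvx : (v, x) ∈ T) :
    ∑ q ∈ T, c q * reroute π x u v ε q =
      ∑ q ∈ T, c q * π q + (c (x, x) + c (v, u) - c (x, u) - c (v, x)) * ε := by
  simp only [reroute, Pi.sub_apply, Pi.add_apply, Pi.single_apply, mul_sub, mul_add, mul_ite,
    mul_zero, Finset.sum_sub_distrib, Finset.sum_add_distrib, Finset.sum_ite_eq', hxx, hvu, hxu,
    hvx, if_true]
  ring

lemma le_sum_reroute_apply_diag (hx : x ∈ S) (hux : u ≠ x) (hvx : v ≠ x) (hε : 0 ≤ ε) :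
    ∑ w ∈ S, π (w, w) + ε ≤ ∑ w ∈ S, reroute π x u v ε (w, w) := by
  have hdiag_xu : ∀ w : V, ¬(w = x ∧ w = u) := fun w h => hux (h.2.symm.trans h.1)
  have hdiag_vx : ∀ w : V, ¬(w = v ∧ w = x) := fun w h => hvx (h.1.symm.trans h.2)
  simp only [reroute, Pi.sub_apply, Pi.add_apply, Pi.single_apply, Prod.mk.injEq, and_self,
    hdiag_xu, hdiag_vx, if_false, sub_zero, Finset.sum_add_distrib, Finset.sum_ite_eq', hx, if_true,
    le_add_iff_nonneg_right]
  exact Finset.sum_nonneg fun w _ => by split_ifs <;> simp [hε]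

lemma reroute_nonneg (hπ : ∀ q, 0 ≤ π q) (hux : u ≠ x) (hvx : v ≠ x) (hε : 0 ≤ ε)
    (hεu : ε ≤ π (x, u)) (hεv : ε ≤ π (v, x)) (q : V × V) : 0 ≤ reroute π x u v ε q := by
  rcases q with ⟨a, b⟩
  simp only [reroute, Pi.add_apply, Pi.sub_apply, Pi.single_apply, Prod.mk.injEq]
  grind

lemma support_reroute_subset (hπ : support π ⊆ ↑S ×ˢ ↑S) (hx : x ∈ S) (hu : u ∈ S)
    (hv : v ∈ S) : support (reroute π x u v ε) ⊆ ↑S ×ˢ ↑S := by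
  refine support_subset_iff'.2 fun q hq => ?_
  have hne : ∀ a b, a ∈ S → b ∈ S → q ≠ (a, b) := fun a b ha hb h => hq (h ▸ ⟨ha, hb⟩)
  simp [reroute, support_subset_iff'.1 hπ q hq, hne, hx, hu, hv]

end Reroute

section Improvement

variable {V : Type*} {μ1 μ2 : V → ℝ} {π : V × V → ℝ} {S : Finset V}

lemma IsPlan.exists_cost_le_sum_diag_lt {G : SimpleGraph V} (hG : G.Connected)
    (hle1 : ∀ u, μ1 u ≤ 1) (hS1 : support μ1 ⊆ S) (hS2 : support μ2 ⊆ S)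
    (hπ : IsPlan π μ1 μ2) {x : V} (hx1 : π (x, x) < μ1 x) (hx2 : π (x, x) < μ2 x) :
    ∃ π', IsPlan π' μ1 μ2 ∧ cost G π' ≤ cost G π ∧
      ∑ w ∈ S, π (w, w) < ∑ w ∈ S, π' (w, w) := by
  obtain ⟨u, hux, hπxu⟩ := hπ.exists_ne_pos_left hx1
  obtain ⟨v, hvx, hπvx⟩ := hπ.exists_ne_pos_right hx2
  have hmem : ∀ {a b}, 0 < π (a, b) → a ∈ S ∧ b ∈ S := fun h =>
    prod_mono hS1 hS2 (hπ.support_subset h.ne')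
  have hxS := (hmem hπxu).1
  have huS := (hmem hπxu).2
  have hvS := (hmem hπvx).1
  set ε := min (π (x, u)) (π (v, x))
  have hε : 0 < ε := lt_min hπxu hπvx
  obtain ⟨hnonneg, hsupp, hrow, hcol⟩ := (isPlan_iff_of_support_subset hle1 hS1 hS2).1 hπ
  have hπ' : IsPlan (reroute π x u v ε) μ1 μ2 :=
    (isPlan_iff_of_support_subset hle1 hS1 hS2).2
      ⟨reroute_nonneg hnonneg hux hvx hε.le (min_le_left _ _) (min_le_right _ _),
        support_reroute_subset hsupp hxS huS hvS,
        fun w => (sum_reroute_apply_left hxS huS w).trans (hrow w),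
        fun w => (sum_reroute_apply_right hxS hvS w).trans (hcol w)⟩
  refine ⟨_, hπ', ?_, by linarith [le_sum_reroute_apply_diag (π := π) hxS hux hvx hε.le]⟩
  have htri : (G.dist v u : ℝ) ≤ G.dist v x + G.dist x u := by exact_mod_cast hG.dist_triangle
  have hdetour : ((G.dist x x : ℝ) + G.dist v u - G.dist x u - G.dist v x) * ε ≤ 0 :=
    mul_nonpos_of_nonpos_of_nonneg (by simp only [SimpleGraph.dist_self]; push_cast; linarith)
      hε.le
  rw [hπ.cost_eq_sum G hS1 hS2, hπ'.cost_eq_sum G hS1 hS2, sum_mul_reroute _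
    (Finset.mk_mem_product hxS hxS) (Finset.mk_mem_product hvS huS)
    (Finset.mk_mem_product hxS huS) (Finset.mk_mem_product hvS hxS)]
  linarith

end Improvement

theorem stmt9 {V : Type*} (G : SimpleGraph V) (hG : G.Connected)
    (μ1 μ2 : V → ℝ) (h1 : IsFinProb μ1) (h2 : IsFinProb μ2) :
    ∃ π : V × V → ℝ, IsPlan π μ1 μ2 ∧ cost G π = W1 G μ1 μ2 ∧
      ∀ x : V, μ1 x ≤ μ2 x → π (x, x) = μ1 x := by
  obtain ⟨S, hS1, hS2⟩ := exists_finset_support_subset h1.2.1 h2.2.1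
  obtain ⟨π₀, hπ₀, hmin⟩ := exists_isPlan_isMinOn_cost G h1 h2
  have hW := W1_eq_cost_of_isMinOn G hπ₀ hmin
  obtain ⟨π, ⟨hπ, hπW⟩, hmax⟩ := (isCompact_setOf_isPlan_cost_eq G h1 h2.2.1 _).exists_isMaxOn
    ⟨π₀, hπ₀, hW.symm⟩ (f := fun π => ∑ w ∈ S, π (w, w))
    (continuous_finsetSum _ fun w _ => continuous_apply (w, w)).continuousOn
  refine ⟨π, hπ, hπW, fun x hx => ?_⟩
  by_contra hne
  have hx1 : π (x, x) < μ1 x := (hπ.apply_le_left x x).lt_of_ne hne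
  obtain ⟨π', hπ', hcost, hdiag⟩ :=
    hπ.exists_cost_le_sum_diag_lt hG h1.le_one hS1 hS2 hx1 (hx1.trans_le hx)
  have hπ'W : cost G π' = W1 G μ1 μ2 := le_antisymm (hcost.trans hπW.le) (hW ▸ hmin hπ')
  exact (hmax ⟨hπ', hπ'W⟩).not_gt hdiag
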